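/- Let γ be a countable ordinal, k a positive integer, and ε > 0. If g : (0,∞) → [0,ω₁) is non-increasing, left-continuous, satisfies g(t) ≤ ω^γ·k for all t, and g(t) = 0 for all t > 1, then C(g,ε) ≤ ω^γ·⌊k/ε⌋, where ⌊k/ε⌋ is the greatest integer not exceeding k/ε. -/

import Mathlib

open MeasureTheory Set Ordinal Filter
open scoped Classical

/-- `g` is non-increasing on `(0,∞)`. -/
def NonIncr (g : ℝ → Ordinal) : Prop := ∀ s t : ℝ, 0 < s → s ≤ t → g t ≤ g s

/-- `g` is left continuous on `(0,∞)`; for non-increasing ordinal-valued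
functions this is equivalent to being locally constant from the left. -/
def LeftCont (g : ℝ → Ordinal) : Prop :=
  ∀ t : ℝ, 0 < t → ∃ δ > 0, ∀ s : ℝ, t - δ < s → s ≤ t → g s = g t

/-- `g` has finite range on `(0,∞)`. -/
def FiniteRange (g : ℝ → Ordinal) : Prop := (g '' Set.Ioi (0:ℝ)).Finite

/-- `g` takes values in `[0,ω₁)`, the countable ordinals. -/
def CountableValued (g : ℝ → Ordinal) : Prop := ∀ t : ℝ, 0 < t → g t < ω₁

/-- `g` vanishes beyond `A`. -/
def VanishesBeyond (g : ℝ → Ordinal) (A : ℝ) : Prop := ∀ t : ℝ, A < t → g t = 0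

/-- The level set `{t ∈ (0,∞) : g t = α}`. -/
def lev (g : ℝ → Ordinal) (α : Ordinal) : Set ℝ := {t | 0 < t ∧ g t = α}

/-- `G` is the non-increasing left-continuous rearrangement of `u`: it is
non-increasing, left continuous, and each nonzero level set has the same
Lebesgue measure as that of `u`. -/
def IsRearrangement (G u : ℝ → Ordinal) : Prop :=
  NonIncr G ∧ LeftCont G ∧ ∀ α : Ordinal, 0 < α → volume (lev G α) = volume (lev u α)

/-- The function `g − γ·1_I` (pointwise ordinal subtraction on `I`). -/
noncomputable def subInd (g : ℝ → Ordinal) (γ : Ordinal) (I : Set ℝ) : ℝ → Ordinal :=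
  fun t => if t ∈ I then g t - γ else g t

/-- `h` is an ε-compression of `g` (by some `γ`): for some `0 < γ ≤ g(ε)` and `f` the
non-increasing left-continuous rearrangement of `g − γ·1_{(0,ε]}`, one has `h = γ·1_{(0,ε]} + f`
on `(0,∞)`. -/
def IsCompression (ε : ℝ) (h g : ℝ → Ordinal) : Prop :=
  ∃ (γ : Ordinal) (f : ℝ → Ordinal), 0 < γ ∧ γ ≤ g ε ∧
    IsRearrangement f (subInd g γ (Set.Ioc 0 ε)) ∧
    (∀ t : ℝ, 0 < t → t ≤ ε → h t = γ + f t) ∧ (∀ t : ℝ, ε < t → h t = f t)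

/-- The set of values `h_n(ε)` over all finite chains `h₀ ≤ g`, `h_{i+1}` an ε-compression of
`h_i`, consisting of non-increasing left-continuous functions with finite range and bounded
support. -/
def AreaVals (ε : ℝ) (g : ℝ → Ordinal) : Set Ordinal :=
  {α | ∃ (n : ℕ) (f : ℕ → ℝ → Ordinal),
    (∀ i ≤ n, NonIncr (f i) ∧ LeftCont (f i) ∧ FiniteRange (f i) ∧
      ∃ A : ℝ, VanishesBeyond (f i) A) ∧
    (∀ t : ℝ, 0 < t → f 0 t ≤ g t) ∧
    (∀ i < n, IsCompression ε (f (i + 1)) (f i)) ∧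
    α = f n ε}

/-- The ε-area `C(g,ε)` under `g`. -/
noncomputable def Carea (ε : ℝ) (g : ℝ → Ordinal) : Ordinal := sSup (AreaVals ε g)

/-!
Put `Ω = ω ^ γ` and measure a function `h` by its layer area `∑ₘ |{t > 0 : Ω * m < h t}|`.
A function bounded by `Ω * k` and vanishing beyond `1` has layer area at most `k`, while a
non-increasing `h` with `Ω * N < h ε` has layer area at least `(N + 1) * ε`; so it suffices that
an ε-compression never increases the layer area.

Write the compressing ordinal as `Ω * c + ρ` with `ρ < Ω`. As `Ω` is additively principal,
`ρ + Ω * (j + 1) = Ω * (j + 1)`, so adding `Ω * c + ρ` on `(0, ε]` shifts every layer above `Ω * c`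
by exactly `c`. Hence the layer areas of the compressed function `γ·1_{(0,ε]} + f` and of
`h = γ·1_{(0,ε]} + (h - γ·1_{(0,ε]})` are given by the same formula in `f` and in
`u = h - γ·1_{(0,ε]}`. The rearrangement `f` has the superlevel measures of `u`, and the one
remaining term, the measure of `{f > 0}` beyond `ε`, is smaller for the non-increasing `f`.
-/

open scoped ENNReal

def superlevel (g : ℝ → Ordinal) (β : Ordinal) : Set ℝ := {t | 0 < t ∧ β < g t}

noncomputable def layerArea (Ω : Ordinal) (g : ℝ → Ordinal) : ℝ≥0∞ :=
  ∑' m : ℕ, volume (superlevel g (Ω * m))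

lemma superlevel_subset_Ioi (g : ℝ → Ordinal) (β : Ordinal) : superlevel g β ⊆ Ioi 0 :=
  fun _ ht => ht.1

lemma volume_eq_inter_Ioc_add_inter_Ioi {S : Set ℝ} (hS : S ⊆ Ioi 0) (ε : ℝ) :
    volume S = volume (S ∩ Ioc 0 ε) + volume (S ∩ Ioi ε) := by
  rw [← measure_inter_add_sdiff S measurableSet_Ioc]
  congr 2
  ext t
  simp only [Set.mem_sdiff, mem_inter_iff, mem_Ioc, mem_Ioi, not_and, not_le]
  exact ⟨fun ⟨ht, h⟩ => ⟨ht, h (hS ht)⟩, fun ⟨ht, h⟩ => ⟨ht, fun _ => h⟩⟩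

section NonIncr

variable {g : ℝ → Ordinal}

lemma NonIncr.ordConnected_lev (hg : NonIncr g) (α : Ordinal) : (lev g α).OrdConnected :=
  ⟨fun x hx y hy z hz =>
    ⟨hx.1.trans_le hz.1, le_antisymm (hx.2 ▸ hg x z hx.1 hz.1)
      (hy.2 ▸ hg z y (hx.1.trans_le hz.1) hz.2)⟩⟩

lemma NonIncr.measurableSet_lev (hg : NonIncr g) (α : Ordinal) : MeasurableSet (lev g α) :=
  (hg.ordConnected_lev α).measurableSet

lemma NonIncr.sub_const (hg : NonIncr g) (γ : Ordinal) : NonIncr fun t => g t - γ :=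
  fun s t hs hst => Ordinal.sub_le.2 ((hg s t hs hst).trans (Ordinal.le_add_sub _ _))

lemma NonIncr.Ioc_subset_superlevel_or_inter_Ioi_eq_empty (hg : NonIncr g) (β : Ordinal)
    (ε : ℝ) : Ioc 0 ε ⊆ superlevel g β ∨ superlevel g β ∩ Ioi ε = ∅ :=
  (eq_empty_or_nonempty _).symm.imp
    (fun ⟨t, ⟨_, hβ⟩, hεt⟩ s hs => ⟨hs.1, hβ.trans_le (hg s t hs.1 (hs.2.trans hεt.le))⟩)
    id

lemma NonIncr.measurableSet_lev_subInd (hg : NonIncr g) (γ : Ordinal) (ε : ℝ)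
    (α : Ordinal) : MeasurableSet (lev (subInd g γ (Ioc 0 ε)) α) := by
  have : lev (subInd g γ (Ioc 0 ε)) α =
      Ioc 0 ε ∩ lev (fun t => g t - γ) α ∪ Ioi ε ∩ lev g α := by
    ext t
    by_cases ht : t ∈ Ioc 0 ε
    · simp [lev, subInd, ht, ht.1, ht.2]
    · simp only [mem_Ioc, not_and, not_le] at ht
      rcases le_or_gt t 0 with ht0 | ht0
      · simp [lev, ht0.not_gt]
      · have hεt := ht ht0
        simp [lev, subInd, ht0, hεt, hεt.not_ge]
  rw [this]
  exact (measurableSet_Ioc.inter ((hg.sub_const γ).measurableSet_lev α)).union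
    (measurableSet_Ioi.inter (hg.measurableSet_lev α))

end NonIncr

lemma FiniteRange.subInd {g : ℝ → Ordinal} (hg : FiniteRange g) (γ : Ordinal) (I : Set ℝ) :
    FiniteRange (subInd g γ I) := by
  refine (hg.union (hg.image (· - γ))).subset ?_
  rintro _ ⟨t, ht, rfl⟩
  simp only [_root_.subInd]
  split_ifs
  · exact Or.inr ⟨g t, ⟨t, ht, rfl⟩, rfl⟩
  · exact Or.inl ⟨t, ht, rfl⟩

lemma LeftCont.volume_lev_pos {g : ℝ → Ordinal} (hg : LeftCont g) {t : ℝ} (ht : 0 < t) :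
    0 < volume (lev g (g t)) := by
  obtain ⟨δ, hδ, hloc⟩ := hg t ht
  have hsub : Ioc (max (t - δ) 0) t ⊆ lev g (g t) := fun s hs =>
    ⟨(le_max_right _ _).trans_lt hs.1, hloc s ((le_max_left _ _).trans_lt hs.1) hs.2⟩
  refine lt_of_lt_of_le ?_ (measure_mono hsub)
  rw [Real.volume_Ioc, ENNReal.ofReal_pos, sub_pos]
  exact max_lt (by linarith) ht

lemma volume_superlevel_eq_sum {g : ℝ → Ordinal} {β : Ordinal} (V : Finset Ordinal)
    (hV : ∀ t, 0 < t → β < g t → g t ∈ V) (hm : ∀ α, MeasurableSet (lev g α)) :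
    volume (superlevel g β) = ∑ α ∈ V.filter (β < ·), volume (lev g α) := by
  have : superlevel g β = ⋃ α ∈ V.filter (β < ·), lev g α := by
    ext t
    simp only [superlevel, lev, mem_ofPred_eq, mem_iUnion, Finset.mem_filter, exists_prop]
    constructor
    · rintro ⟨ht, hβ⟩
      exact ⟨g t, ⟨hV t ht hβ, hβ⟩, ht, rfl⟩
    · rintro ⟨α, ⟨-, hβ⟩, ht, rfl⟩
      exact ⟨ht, hβ⟩
  rw [this, measure_biUnion_finset _ fun α _ => hm α]
  intro α _ α' _ hne
  exact disjoint_left.2 fun t ht ht' => hne (ht.2.symm.trans ht'.2)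

lemma IsRearrangement.volume_superlevel {f u : ℝ → Ordinal} (hr : IsRearrangement f u)
    (hu : FiniteRange u) (hmu : ∀ α, MeasurableSet (lev u α)) (β : Ordinal) :
    volume (superlevel f β) = volume (superlevel u β) := by
  obtain ⟨hfNI, hfLC, hlev⟩ := hr
  rw [volume_superlevel_eq_sum hu.toFinset ?_ hfNI.measurableSet_lev,
    volume_superlevel_eq_sum hu.toFinset (fun t ht _ => hu.mem_toFinset.2 ⟨t, ht, rfl⟩) hmu]
  · exact Finset.sum_congr rfl fun α hα =>
      hlev α (zero_le.trans_lt (Finset.mem_filter.1 hα).2)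
  · intro t ht hβ
    have hpos := hfLC.volume_lev_pos ht
    rw [hlev _ (zero_le.trans_lt hβ)] at hpos
    obtain ⟨s, hs, hsf⟩ := nonempty_of_measure_ne_zero hpos.ne'
    exact hu.mem_toFinset.2 ⟨s, hs, hsf⟩

section Layers

variable {Ω ρ : Ordinal}

lemma mul_natCast_add_natCast_eq (hΩ : IsPrincipal (· + ·) Ω) (hρ : ρ < Ω) (c j : ℕ) :
    Ω * (j + (c + 1) : ℕ) = Ω * c + ρ + Ω * (j + 1 : ℕ) := by
  rw [show j + (c + 1) = c + (1 + j) by omega, show j + 1 = 1 + j by omega]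
  push_cast
  rw [mul_add, mul_add, mul_one, add_assoc (Ω * c) ρ, ← add_assoc ρ,
    isPrincipal_add_iff_add_left_eq_self.1 hΩ ρ hρ]

lemma tsum_volume_lt_add_inter_Ioc (hΩ : IsPrincipal (· + ·) Ω) (hρ : ρ < Ω) (c : ℕ) (ε : ℝ)
    (φ : ℝ → Ordinal) :
    ∑' m : ℕ, volume ({t | Ω * m < Ω * c + ρ + φ t} ∩ Ioc 0 ε) = c * volume (Ioc (0 : ℝ) ε)
      + (if ρ = 0 then volume (superlevel φ 0 ∩ Ioc 0 ε) else volume (Ioc (0 : ℝ) ε))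
      + ∑' j : ℕ, volume (superlevel φ (Ω * (j + 1 : ℕ)) ∩ Ioc 0 ε) := by
  have hlow : ∀ m < c, {t | Ω * m < Ω * c + ρ + φ t} ∩ Ioc 0 ε = Ioc 0 ε := fun m hm =>
    inter_eq_right.2 fun _ _ => ((mul_lt_mul_iff_right₀ (zero_le.trans_lt hρ)).2
      (Nat.cast_lt.2 hm)).trans_le (le_add_right le_self_add)
  have hmid : volume ({t | Ω * c < Ω * c + ρ + φ t} ∩ Ioc 0 ε) =
      if ρ = 0 then volume (superlevel φ 0 ∩ Ioc 0 ε) else volume (Ioc (0 : ℝ) ε) := by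
    simp_rw [add_assoc (Ω * c), lt_add_iff_pos_right]
    split_ifs with hρ0
    · simp only [hρ0, zero_add]
      congr 1
      ext t
      exact ⟨fun ⟨h, ht⟩ => ⟨⟨ht.1, h⟩, ht⟩, fun ⟨⟨_, h⟩, ht⟩ => ⟨h, ht⟩⟩
    · exact congrArg volume
        (inter_eq_right.2 fun _ _ => (pos_iff_ne_zero.2 hρ0).trans_le le_self_add)
  have hhigh : ∀ j : ℕ, {t | Ω * (j + (c + 1) : ℕ) < Ω * c + ρ + φ t} ∩ Ioc 0 ε =
      superlevel φ (Ω * (j + 1 : ℕ)) ∩ Ioc 0 ε := by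
    intro j
    ext t
    rw [mul_natCast_add_natCast_eq hΩ hρ]
    simp only [add_lt_add_iff_left, superlevel, mem_inter_iff, mem_ofPred_eq, mem_Ioc]
    tauto
  rw [← Summable.sum_add_tsum_nat_add' (k := c + 1) ENNReal.summable, Finset.sum_range_succ,
    Finset.sum_congr rfl fun m hm => by rw [hlow m (Finset.mem_range.1 hm)],
    Finset.sum_const, Finset.card_range, _root_.nsmul_eq_mul, hmid]
  simp only [hhigh]

lemma layerArea_eq_of_eq_add_on_Ioc (hΩ : IsPrincipal (· + ·) Ω) (hρ : ρ < Ω) {c : ℕ}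
    {ε : ℝ} {φ ψ : ℝ → Ordinal} (hIoc : ∀ t ∈ Ioc 0 ε, ψ t = Ω * c + ρ + φ t)
    (hIoi : ∀ t, ε < t → ψ t = φ t) :
    layerArea Ω ψ = c * volume (Ioc (0 : ℝ) ε)
      + ((if ρ = 0 then volume (superlevel φ 0 ∩ Ioc 0 ε) else volume (Ioc (0 : ℝ) ε))
        + volume (superlevel φ 0 ∩ Ioi ε))
      + ∑' j : ℕ, volume (superlevel φ (Ω * (j + 1 : ℕ))) := by
  have hIoc' : ∀ β, superlevel ψ β ∩ Ioc 0 ε = {t | β < Ω * c + ρ + φ t} ∩ Ioc 0 ε := by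
    intro β
    ext t
    simp only [superlevel, mem_inter_iff, mem_ofPred_eq]
    exact ⟨fun ⟨⟨_, h⟩, ht⟩ => ⟨hIoc t ht ▸ h, ht⟩,
      fun ⟨h, ht⟩ => ⟨⟨ht.1, (hIoc t ht).symm ▸ h⟩, ht⟩⟩
  have hIoi' : ∀ β, superlevel ψ β ∩ Ioi ε = superlevel φ β ∩ Ioi ε := by
    intro β
    ext t
    simp only [superlevel, mem_inter_iff, mem_ofPred_eq, mem_Ioi]
    exact ⟨fun ⟨⟨h0, h⟩, ht⟩ => ⟨⟨h0, hIoi t ht ▸ h⟩, ht⟩,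
      fun ⟨⟨h0, h⟩, ht⟩ => ⟨⟨h0, (hIoi t ht).symm ▸ h⟩, ht⟩⟩
  have hsplit := fun (g : ℝ → Ordinal) β =>
    volume_eq_inter_Ioc_add_inter_Ioi (superlevel_subset_Ioi g β) ε
  rw [layerArea, tsum_congr fun m => hsplit ψ _, ENNReal.tsum_add,
    tsum_eq_zero_add' (f := fun m : ℕ => volume (superlevel ψ (Ω * m) ∩ Ioi ε))
      ENNReal.summable]
  simp only [hIoc', hIoi', tsum_volume_lt_add_inter_Ioc hΩ hρ, Nat.cast_zero, mul_zero]
  rw [tsum_congr fun j => hsplit φ _, ENNReal.tsum_add]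
  ring

end Layers

lemma layerArea_eq_top_of_mul_omega0_le {Ω γ : Ordinal} (hΩ0 : Ω ≠ 0) (hγ : Ω * ω ≤ γ)
    {ε : ℝ} (hε : 0 < ε) {h : ℝ → Ordinal} (hγh : ∀ t ∈ Ioc 0 ε, γ ≤ h t) : layerArea Ω h = ⊤ := by
  have hlayer : ∀ m : ℕ, volume (Ioc (0 : ℝ) ε) ≤ volume (superlevel h (Ω * m)) :=
    fun m => measure_mono fun t ht => ⟨ht.1, lt_of_lt_of_le
      ((mul_lt_mul_iff_right₀ (pos_iff_ne_zero.2 hΩ0)).2 (natCast_lt_omega0 m))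
      (hγ.trans (hγh t ht))⟩
  refine top_unique ?_
  calc ⊤ = ∑' _ : ℕ, volume (Ioc (0 : ℝ) ε) :=
        (ENNReal.tsum_const_eq_top_of_ne_zero (by simp [hε])).symm
    _ ≤ layerArea Ω h := ENNReal.tsum_le_tsum hlayer

lemma volume_Ioc_add_superlevel_inter_Ioi_le {f u : ℝ → Ordinal} (hf : NonIncr f) (ε : ℝ)
    (hvol : volume (superlevel f 0) = volume (superlevel u 0)) :
    volume (Ioc (0 : ℝ) ε) + volume (superlevel f 0 ∩ Ioi ε) ≤
      volume (Ioc (0 : ℝ) ε) + volume (superlevel u 0 ∩ Ioi ε) := by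
  rcases hf.Ioc_subset_superlevel_or_inter_Ioi_eq_empty 0 ε with hsub | hempty
  · calc volume (Ioc (0 : ℝ) ε) + volume (superlevel f 0 ∩ Ioi ε)
        = volume (superlevel u 0) := by
          rw [← hvol, volume_eq_inter_Ioc_add_inter_Ioi (superlevel_subset_Ioi f 0) ε,
            inter_eq_right.2 hsub]
      _ = _ := volume_eq_inter_Ioc_add_inter_Ioi (superlevel_subset_Ioi u 0) ε
      _ ≤ _ := by gcongr; exact inter_subset_right
  · rw [hempty, measure_empty, add_zero]
    exact le_self_add

lemma layerArea_le_of_isCompression {Ω : Ordinal} (hΩ : IsPrincipal (· + ·) Ω) (hΩ0 : Ω ≠ 0)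
    {ε : ℝ} (hε : 0 < ε) {h h' : ℝ → Ordinal} (hNI : NonIncr h) (hFR : FiniteRange h)
    (hc : IsCompression ε h' h) : layerArea Ω h' ≤ layerArea Ω h := by
  obtain ⟨γ, f, -, hγle, hre, hIoc, hIoi⟩ := hc
  have hγh : ∀ t ∈ Ioc 0 ε, γ ≤ h t := fun t ht => hγle.trans (hNI t ε ht.1 ht.2)
  rcases le_or_gt ω (γ / Ω) with hinf | hfin
  · have hγ : Ω * ω ≤ γ := (mul_le_mul_right hinf Ω).trans (Ordinal.mul_div_le γ Ω)
    rw [layerArea_eq_top_of_mul_omega0_le hΩ0 hγ hε hγh]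
    exact le_top
  obtain ⟨c, hc⟩ := Ordinal.lt_omega0.1 hfin
  have hγ : γ = Ω * c + γ % Ω := hc ▸ (Ordinal.div_add_mod γ Ω).symm
  have hρ := Ordinal.mod_lt γ hΩ0
  set u := subInd h γ (Ioc 0 ε)
  have hu_Ioc : ∀ t ∈ Ioc 0 ε, h t = Ω * c + γ % Ω + u t := fun t ht => by
    simp only [u, subInd, if_pos ht, ← hγ, Ordinal.add_sub_cancel_of_le (hγh t ht)]
  have hu_Ioi : ∀ t, ε < t → h t = u t := fun t ht => by
    simp only [u, subInd, if_neg fun hmem : t ∈ Ioc 0 ε => not_le.2 ht hmem.2]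
  rw [layerArea_eq_of_eq_add_on_Ioc hΩ hρ (fun t ht => (hIoc t ht.1 ht.2).trans (by rw [← hγ]))
      hIoi, layerArea_eq_of_eq_add_on_Ioc hΩ hρ hu_Ioc hu_Ioi]
  have hvol := hre.volume_superlevel (hFR.subInd γ _) (hNI.measurableSet_lev_subInd γ ε)
  simp only [hvol]
  gcongr _ + ?_ + _
  split_ifs
  · simp only [← volume_eq_inter_Ioc_add_inter_Ioi (superlevel_subset_Ioi _ 0), hvol, le_refl]
  · exact volume_Ioc_add_superlevel_inter_Ioi_le hre.1 ε (hvol 0)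

lemma layerArea_le_of_le_mul {Ω : Ordinal} {k : ℕ} {g : ℝ → Ordinal}
    (hbd : ∀ t, 0 < t → g t ≤ Ω * k) (hvan : ∀ t, 1 < t → g t = 0) : layerArea Ω g ≤ k := by
  have hempty : ∀ m ∉ Finset.range k, volume (superlevel g (Ω * m)) = 0 := by
    intro m hm
    rw [Finset.mem_range, not_lt] at hm
    rw [eq_empty_iff_forall_notMem.2 fun t (ht : t ∈ superlevel g (Ω * m)) =>
      ((hbd t ht.1).trans (mul_le_mul_right (Nat.cast_le.2 hm) Ω)).not_gt ht.2, measure_empty]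
  calc layerArea Ω g = ∑ m ∈ Finset.range k, volume (superlevel g (Ω * m)) := tsum_eq_sum hempty
    _ ≤ ∑ _m ∈ Finset.range k, volume (Ioc (0 : ℝ) 1) := Finset.sum_le_sum fun m _ =>
      measure_mono fun t ht => ⟨ht.1, not_lt.1 fun h1 => by simpa [hvan t h1] using ht.2⟩
    _ = k := by simp

lemma le_mul_floor_of_layerArea_le {Ω : Ordinal} {h : ℝ → Ordinal} {ε : ℝ} (hε : 0 < ε)
    (hNI : NonIncr h) {k : ℕ} (hA : layerArea Ω h ≤ k) : h ε ≤ Ω * (⌊(k : ℝ) / ε⌋₊ : ℕ) := by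
  set N := ⌊(k : ℝ) / ε⌋₊
  by_contra! hlt
  have hsub : ∀ m ∈ Finset.range (N + 1), Ioc 0 ε ⊆ superlevel h (Ω * m) := fun m hm t ht =>
    ⟨ht.1, ((mul_le_mul_right (Nat.cast_le.2 (Nat.lt_succ_iff.1 (Finset.mem_range.1 hm)))
      Ω).trans_lt hlt).trans_le (hNI t ε ht.1 ht.2)⟩
  have hmass : ENNReal.ofReal ((N + 1 : ℕ) * ε) ≤ ENNReal.ofReal k :=
    calc ENNReal.ofReal ((N + 1 : ℕ) * ε)
        = ∑ _m ∈ Finset.range (N + 1), volume (Ioc (0 : ℝ) ε) := by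
          rw [ENNReal.ofReal_mul (Nat.cast_nonneg _), ENNReal.ofReal_natCast]
          simp [Real.volume_Ioc]
      _ ≤ ∑ m ∈ Finset.range (N + 1), volume (superlevel h (Ω * m)) :=
          Finset.sum_le_sum fun m hm => measure_mono (hsub m hm)
      _ ≤ layerArea Ω h := ENNReal.sum_le_tsum _
      _ ≤ k := hA
      _ = ENNReal.ofReal k := (ENNReal.ofReal_natCast k).symm
  have hlt' := Nat.lt_floor_add_one ((k : ℝ) / ε)
  rw [div_lt_iff₀ hε, ← Nat.cast_add_one] at hlt'
  exact hlt'.not_ge ((ENNReal.ofReal_le_ofReal_iff (Nat.cast_nonneg k)).1 hmass)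

theorem stmt_10_general (γ : Ordinal) (k : ℕ) (ε : ℝ) (hε : 0 < ε)
    (g : ℝ → Ordinal)
    (hbd : ∀ t : ℝ, 0 < t → g t ≤ (ω : Ordinal) ^ γ * (k : Ordinal))
    (hvan : ∀ t : ℝ, (1 : ℝ) < t → g t = 0) :
    Carea ε g ≤ (ω : Ordinal) ^ γ * ((⌊(k : ℝ) / ε⌋₊ : ℕ) : Ordinal) := by
  refine csSup_le' ?_
  rintro _ ⟨n, f, hreg, hle, hcomp, rfl⟩
  have harea : ∀ i ≤ n, layerArea (ω ^ γ) (f i) ≤ k := by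
    intro i
    induction i with
    | zero =>
      intro _
      refine layerArea_le_of_le_mul (fun t ht => (hle t ht).trans (hbd t ht)) fun t ht => ?_
      simpa [hvan t ht] using hle t (one_pos.trans ht)
    | succ i ih =>
      intro hi
      exact (layerArea_le_of_isCompression (isPrincipal_add_omega0_opow γ)
        (opow_pos γ omega0_pos).ne' hε (hreg i (by omega)).1 (hreg i (by omega)).2.2.1
        (hcomp i hi)).trans (ih (by omega))
  exact le_mul_floor_of_layerArea_le hε (hreg n le_rfl).1 (harea n le_rfl)

/-- upper bound for the ε-area of a function bounded by `ω^γ·k`. -/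
theorem stmt_10 (γ : Ordinal) (hγ : γ < ω₁) (k : ℕ) (hk : 0 < k) (ε : ℝ) (hε : 0 < ε)
    (g : ℝ → Ordinal) (hNI : NonIncr g) (hLC : LeftCont g)
    (hbd : ∀ t : ℝ, 0 < t → g t ≤ (ω : Ordinal) ^ γ * (k : Ordinal))
    (hvan : ∀ t : ℝ, (1 : ℝ) < t → g t = 0) :
    Carea ε g ≤ (ω : Ordinal) ^ γ * ((⌊(k : ℝ) / ε⌋₊ : ℕ) : Ordinal) :=
  stmt_10_general γ k ε hε g hbd hvan
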